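/- Let M be a smooth real manifold without boundary, Δ and X smooth vector fields on M, h : M → ℝ a smooth function, and n ∈ ℝ. Assume (M,Δ) is a strict homogeneous structure: there is an open dense subset O ⊆ M such that for every x ∈ O the cotangent space T*_x M is spanned by the differentials d_x f of smooth functions f : M → ℝ satisfying Δf = f. Then the following are equivalent: (1) [Δ,X] = n · X and Δh = n · h; (2) for every smooth f : M → ℝ with Δf = f one has Δ(Xf + h·f) = (n+1)·(Xf + h·f), and for every smooth f : M → ℝ with Δf = 0 one has Δ(Xf + h·f) = n·(Xf + h·f). Here (Xg)(x) = d_x g(X(x)) and (Δg)(x) = d_x g(Δ(x)). -/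

import Mathlib

open scoped Manifold Topology
open Set Filter ContinuousLinearMap

/-- The pushforward to the model space `E` of a vector field on `M` by the extended
chart at `x₀` (with junk values outside the chart). -/
noncomputable def chartPushforward {E : Type*} [NormedAddCommGroup E] [NormedSpace ℝ E]
    {M : Type*} [TopologicalSpace M] [ChartedSpace E M]
    (x₀ : M) (Δ : (x : M) → TangentSpace 𝓘(ℝ, E) x) : E → E :=
  fun y =>
    mfderiv 𝓘(ℝ, E) 𝓘(ℝ, E) (extChartAt 𝓘(ℝ, E) x₀)
      ((extChartAt 𝓘(ℝ, E) x₀).symm y) (Δ ((extChartAt 𝓘(ℝ, E) x₀).symm y))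

/-- The Lie bracket of two vector fields on a manifold, computed in the extended chart
at the point: push both fields forward by the chart, take the flat Lie bracket
`VectorField.lieBracket`, and pull the result back by (the inverse of) the chart
differential. -/
noncomputable def mLieBracket {E : Type*} [NormedAddCommGroup E] [NormedSpace ℝ E]
    {M : Type*} [TopologicalSpace M] [ChartedSpace E M]
    (Δ X : (x : M) → TangentSpace 𝓘(ℝ, E) x) (x₀ : M) : TangentSpace 𝓘(ℝ, E) x₀ :=
  (mfderiv 𝓘(ℝ, E) 𝓘(ℝ, E) (extChartAt 𝓘(ℝ, E) x₀) x₀).inverse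
    ((VectorField.lieBracket ℝ (chartPushforward x₀ Δ) (chartPushforward x₀ X)
      (extChartAt 𝓘(ℝ, E) x₀ x₀) : E))

/-- The action `(X g)(x) = d_x g (X x)` of a vector field on a function. -/
noncomputable def vfAction {E : Type*} [NormedAddCommGroup E] [NormedSpace ℝ E]
    {M : Type*} [TopologicalSpace M] [ChartedSpace E M]
    (X : (x : M) → TangentSpace 𝓘(ℝ, E) x) (f : M → ℝ) (y : M) : ℝ :=
  mfderiv 𝓘(ℝ, E) 𝓘(ℝ, ℝ) f y (X y)

section Helpers
set_option linter.unusedSectionVars false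
variable {E : Type*} [NormedAddCommGroup E] [NormedSpace ℝ E]
    {M : Type*} [TopologicalSpace M] [ChartedSpace E M]
    [IsManifold 𝓘(ℝ, E) ((⊤ : ℕ∞) : WithTop ℕ∞) M]

local notation "IE" => 𝓘(ℝ, E)

lemma chartPushforward_apply (x₀ : M) (Y : (x : M) → TangentSpace IE x) {x : M}
    (hx : x ∈ (extChartAt IE x₀).source) :
    chartPushforward x₀ Y (extChartAt IE x₀ x)
      = mfderiv IE IE (extChartAt IE x₀) x (Y x) := by
  have h1 : (extChartAt IE x₀).symm (extChartAt IE x₀ x) = x := (extChartAt IE x₀).left_inv hx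
  rw [chartPushforward, h1]

lemma rep_mfderiv (x₀ : M) {x : M} (hx : x ∈ (extChartAt IE x₀).source)
    {g : M → ℝ} {G : E → ℝ} (hG : DifferentiableAt ℝ G (extChartAt IE x₀ x))
    (hrep : ∀ z ∈ (extChartAt IE x₀).source, g z = G (extChartAt IE x₀ z)) :
    mfderiv IE 𝓘(ℝ, ℝ) g x
      = (fderiv ℝ G (extChartAt IE x₀ x)).comp (mfderiv IE IE (extChartAt IE x₀) x) := by
  have hx' : x ∈ (chartAt E x₀).source := by rwa [extChartAt_source] at hx
  have hψ : MDifferentiableAt IE IE (extChartAt IE x₀) x := mdifferentiableAt_extChartAt hx'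
  have hGm : MDifferentiableAt IE 𝓘(ℝ, ℝ) G (extChartAt IE x₀ x) := hG.mdifferentiableAt
  have heq : g =ᶠ[𝓝 x] (G ∘ extChartAt IE x₀) := by
    filter_upwards [(isOpen_extChartAt_source x₀).mem_nhds hx] with z hz using hrep z hz
  rw [heq.mfderiv_eq, mfderiv_comp x hGm hψ, mfderiv_eq_fderiv]
  rfl

lemma vfAction_rep (x₀ : M) {x : M} (hx : x ∈ (extChartAt IE x₀).source)
    {g : M → ℝ} {G : E → ℝ} (hG : DifferentiableAt ℝ G (extChartAt IE x₀ x))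
    (hrep : ∀ z ∈ (extChartAt IE x₀).source, g z = G (extChartAt IE x₀ z))
    (Y : (x : M) → TangentSpace IE x) :
    vfAction Y g x
      = fderiv ℝ G (extChartAt IE x₀ x) (chartPushforward x₀ Y (extChartAt IE x₀ x)) := by
  rw [vfAction, rep_mfderiv x₀ hx hG hrep, chartPushforward_apply x₀ Y hx]
  rfl

lemma contDiffOn_rep {f : M → ℝ} (hf : ContMDiff IE 𝓘(ℝ, ℝ) (⊤ : ℕ∞) f) (x₀ : M) :
    ContDiffOn ℝ (⊤ : ℕ∞) (f ∘ (extChartAt IE x₀).symm) (extChartAt IE x₀).target :=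
  (hf.comp_contMDiffOn (contMDiffOn_extChartAt_symm x₀)).contDiffOn

lemma mfderiv_extChartAt_eq_triv (x₀ : M) {z : M} (hz : z ∈ (extChartAt IE x₀).source)
    (v : TangentSpace IE z) :
    mfderiv IE IE (extChartAt IE x₀) z v
      = (trivializationAt E (TangentSpace IE) x₀ ⟨z, v⟩).2 := by
  have hz' : z ∈ (chartAt E x₀).source := by rwa [extChartAt_source] at hz
  rw [(hasMFDerivAt_extChartAt hz').mfderiv, mfderiv_chartAt_eq_tangentCoordChange hz']
  rfl

lemma contDiffOn_chartPushforward {Y : (x : M) → TangentSpace IE x}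
    (hY : ContMDiff 𝓘(ℝ, E) 𝓘(ℝ, E).tangent (⊤ : ℕ∞) (fun x => (⟨x, Y x⟩ : TangentBundle IE M)))
    (x₀ : M) :
    ContDiffOn ℝ (⊤ : ℕ∞) (chartPushforward x₀ Y) (extChartAt IE x₀).target := by
  have hτ : ContMDiffOn IE 𝓘(ℝ, E) (⊤ : ℕ∞)
      (fun z => (trivializationAt E (TangentSpace IE) x₀ ⟨z, Y z⟩).2)
      (extChartAt IE x₀).source := by
    intro z hz
    have hz' : z ∈ (chartAt E x₀).source := by rwa [extChartAt_source] at hz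
    have h1 : ContMDiffAt IE 𝓘(ℝ, E) (⊤ : ℕ∞)
        (fun z' => (trivializationAt E (TangentSpace IE) z ⟨z', Y z'⟩).2) z :=
      (Bundle.contMDiffAt_section _).1 (hY z)
    have h2 : ContMDiffAt IE 𝓘(ℝ, E →L[ℝ] E) (⊤ : ℕ∞)
        (fun b => ((trivializationAt E (TangentSpace IE) z).coordChangeL ℝ
          (trivializationAt E (TangentSpace IE) x₀) b : E →L[ℝ] E)) z :=
      contMDiffAt_coordChangeL (mem_chart_source E z) hz'
    have h3 := h2.clm_apply h1
    refine (h3.congr_of_eventuallyEq ?_).contMDiffWithinAt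
    have hnb : (chartAt E z).source ∩ (chartAt E x₀).source ∈ 𝓝 z :=
      ((chartAt E z).open_source.inter (chartAt E x₀).open_source).mem_nhds
        ⟨mem_chart_source E z, hz'⟩
    filter_upwards [hnb] with b hb
    have hb1 : b ∈ (trivializationAt E (TangentSpace IE) z).baseSet := by simpa using hb.1
    have hb2 : b ∈ (trivializationAt E (TangentSpace IE) x₀).baseSet := by simpa using hb.2
    rw [ContinuousLinearEquiv.coe_coe, Bundle.Trivialization.coordChangeL_apply _ _ ⟨hb1, hb2⟩,
      Bundle.Trivialization.symm_apply_apply_mk _ hb1]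
  have hsymm := contMDiffOn_extChartAt_symm (I := IE) x₀ (n := (⊤ : ℕ∞))
  have hcomp := hτ.comp hsymm (fun y hy => (extChartAt IE x₀).map_target hy)
  refine hcomp.contDiffOn.congr fun y hy => ?_
  have hz : (extChartAt IE x₀).symm y ∈ (extChartAt IE x₀).source :=
    (extChartAt IE x₀).map_target hy
  rw [chartPushforward, mfderiv_extChartAt_eq_triv x₀ hz]
  rfl

lemma master {Δ X : (x : M) → TangentSpace IE x}
    (hΔ : ContMDiff 𝓘(ℝ, E) 𝓘(ℝ, E).tangent (⊤ : ℕ∞) (fun x => (⟨x, Δ x⟩ : TangentBundle IE M)))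
    (hX : ContMDiff 𝓘(ℝ, E) 𝓘(ℝ, E).tangent (⊤ : ℕ∞) (fun x => (⟨x, X x⟩ : TangentBundle IE M)))
    {h : M → ℝ} (hh : ContMDiff IE 𝓘(ℝ, ℝ) (⊤ : ℕ∞) h)
    {f : M → ℝ} (hf : ContMDiff IE 𝓘(ℝ, ℝ) (⊤ : ℕ∞) f)
    (x₀ : M) {x : M} (hx : x ∈ (extChartAt IE x₀).source) :
    vfAction Δ (fun z => vfAction X f z + h z * f z) x
      = fderiv ℝ (f ∘ (extChartAt IE x₀).symm) (extChartAt IE x₀ x)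
          (VectorField.lieBracket ℝ (chartPushforward x₀ Δ) (chartPushforward x₀ X)
            (extChartAt IE x₀ x))
        + vfAction X (fun z => vfAction Δ f z) x
        + vfAction Δ h x * f x + h x * vfAction Δ f x := by
  set ψ := extChartAt IE x₀ with hψdef
  set y₀ := ψ x with hy₀
  have ht : IsOpen ψ.target := isOpen_extChartAt_target x₀
  have hy₀t : y₀ ∈ ψ.target := ψ.map_source hx
  set F := f ∘ ψ.symm with hFdef
  set Hf := h ∘ ψ.symm with hHdef
  set Δ' := chartPushforward x₀ Δ with hΔ'def
  set X' := chartPushforward x₀ X with hX'def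
  have h1top : ((⊤ : ℕ∞) : WithTop ℕ∞) ≠ 0 := by simp
  have hF : ContDiffOn ℝ (⊤ : ℕ∞) F ψ.target := contDiffOn_rep hf x₀
  have hH : ContDiffOn ℝ (⊤ : ℕ∞) Hf ψ.target := contDiffOn_rep hh x₀
  have hΔ'c : ContDiffOn ℝ (⊤ : ℕ∞) Δ' ψ.target := contDiffOn_chartPushforward hΔ x₀
  have hX'c : ContDiffOn ℝ (⊤ : ℕ∞) X' ψ.target := contDiffOn_chartPushforward hX x₀
  have hF1 : ContDiffOn ℝ (⊤ : ℕ∞) (fderiv ℝ F) ψ.target :=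
    hF.fderiv_of_isOpen ht (le_of_eq rfl)
  have hFd : ∀ y ∈ ψ.target, DifferentiableAt ℝ F y := fun y hy =>
    (hF.differentiableOn h1top).differentiableAt (ht.mem_nhds hy)
  have hHd : DifferentiableAt ℝ Hf y₀ :=
    (hH.differentiableOn h1top).differentiableAt (ht.mem_nhds hy₀t)
  have hΔ'd : DifferentiableAt ℝ Δ' y₀ :=
    (hΔ'c.differentiableOn h1top).differentiableAt (ht.mem_nhds hy₀t)
  have hX'd : DifferentiableAt ℝ X' y₀ :=
    (hX'c.differentiableOn h1top).differentiableAt (ht.mem_nhds hy₀t)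
  have hF1d : DifferentiableAt ℝ (fderiv ℝ F) y₀ :=
    (hF1.differentiableOn h1top).differentiableAt (ht.mem_nhds hy₀t)
  have repf : ∀ z ∈ ψ.source, f z = F (ψ z) := fun z hz => (congrArg f (ψ.left_inv hz)).symm
  have reph : ∀ z ∈ ψ.source, h z = Hf (ψ z) := fun z hz => (congrArg h (ψ.left_inv hz)).symm
  have repXf : ∀ z ∈ ψ.source, vfAction X f z = fderiv ℝ F (ψ z) (X' (ψ z)) := fun z hz =>
    vfAction_rep x₀ hz (hFd _ (ψ.map_source hz)) repf X
  have repΔf : ∀ z ∈ ψ.source, vfAction Δ f z = fderiv ℝ F (ψ z) (Δ' (ψ z)) := fun z hz =>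
    vfAction_rep x₀ hz (hFd _ (ψ.map_source hz)) repf Δ
  have repΔh : vfAction Δ h x = fderiv ℝ Hf y₀ (Δ' y₀) := vfAction_rep x₀ hx hHd reph Δ
  -- left-hand side
  have hGd : DifferentiableAt ℝ (fun y => fderiv ℝ F y (X' y) + Hf y * F y) y₀ :=
    (hF1d.clm_apply hX'd).add (hHd.mul (hFd _ hy₀t))
  have lhs : vfAction Δ (fun z => vfAction X f z + h z * f z) x
      = fderiv ℝ (fun y => fderiv ℝ F y (X' y) + Hf y * F y) y₀ (Δ' y₀) :=
    vfAction_rep x₀ hx hGd (fun z hz => by rw [repXf z hz, reph z hz, repf z hz]) Δ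
  have hGX : HasFDerivAt (fun y => fderiv ℝ F y (X' y))
      ((fderiv ℝ F y₀).comp (fderiv ℝ X' y₀) + (fderiv ℝ (fderiv ℝ F) y₀).flip (X' y₀)) y₀ :=
    (hF1d.hasFDerivAt).clm_apply (hX'd.hasFDerivAt)
  have hmul : HasFDerivAt (fun y => Hf y * F y)
      (Hf y₀ • fderiv ℝ F y₀ + F y₀ • fderiv ℝ Hf y₀) y₀ :=
    (hHd.hasFDerivAt).mul ((hFd _ hy₀t).hasFDerivAt)
  have hG' := (hGX.add hmul).fderiv
  have exp1 : fderiv ℝ (fun y => fderiv ℝ F y (X' y) + Hf y * F y) y₀ (Δ' y₀)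
      = fderiv ℝ F y₀ (fderiv ℝ X' y₀ (Δ' y₀)) + fderiv ℝ (fderiv ℝ F) y₀ (Δ' y₀) (X' y₀)
        + (Hf y₀ * fderiv ℝ F y₀ (Δ' y₀) + F y₀ * fderiv ℝ Hf y₀ (Δ' y₀)) := by
    rw [show (fun y => fderiv ℝ F y (X' y) + Hf y * F y) = ((fun y => fderiv ℝ F y (X' y)) + fun y => Hf y * F y) from rfl, hG']
    simp only [ContinuousLinearMap.add_apply, ContinuousLinearMap.coe_comp',
      Function.comp_apply, ContinuousLinearMap.flip_apply, ContinuousLinearMap.smul_apply,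
      smul_eq_mul]
  -- the X (Δ f) term
  have rhsX : vfAction X (fun z => vfAction Δ f z) x
      = fderiv ℝ F y₀ (fderiv ℝ Δ' y₀ (X' y₀)) + fderiv ℝ (fderiv ℝ F) y₀ (X' y₀) (Δ' y₀) := by
    have hGΔd : DifferentiableAt ℝ (fun y => fderiv ℝ F y (Δ' y)) y₀ := hF1d.clm_apply hΔ'd
    rw [vfAction_rep x₀ hx hGΔd (fun z hz => repΔf z hz) X,
      ((hF1d.hasFDerivAt).clm_apply (hΔ'd.hasFDerivAt)).fderiv]
    simp only [ContinuousLinearMap.add_apply, ContinuousLinearMap.coe_comp',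
      Function.comp_apply, ContinuousLinearMap.flip_apply]
    rfl
  have h2top : (2 : WithTop ℕ∞) ≤ ((⊤ : ℕ∞) : WithTop ℕ∞) := by
    rw [show ((2 : WithTop ℕ∞)) = (((2 : ℕ∞)) : WithTop ℕ∞) by norm_cast]
    exact WithTop.coe_le_coe.2 le_top
  have hsym : fderiv ℝ (fderiv ℝ F) y₀ (Δ' y₀) (X' y₀)
      = fderiv ℝ (fderiv ℝ F) y₀ (X' y₀) (Δ' y₀) :=
    (hF.contDiffAt (ht.mem_nhds hy₀t)).isSymmSndFDerivAt (by rw [minSmoothness_of_isRCLikeNormedField]; exact h2top) (Δ' y₀) (X' y₀)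
  have hlie : VectorField.lieBracket ℝ Δ' X' y₀
      = fderiv ℝ X' y₀ (Δ' y₀) - fderiv ℝ Δ' y₀ (X' y₀) := rfl
  rw [lhs, exp1, rhsX, repΔh, hlie, map_sub, hsym, repΔf x hx, repf x hx, reph x hx]
  ring

lemma vfAction_eq_fderiv (x₀ : M) {x : M} (hx : x ∈ (extChartAt IE x₀).source)
    {f : M → ℝ} (hf : ContMDiff IE 𝓘(ℝ, ℝ) (⊤ : ℕ∞) f) (Y : (x : M) → TangentSpace IE x) :
    vfAction Y f x = fderiv ℝ (f ∘ (extChartAt IE x₀).symm) (extChartAt IE x₀ x)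
      (chartPushforward x₀ Y (extChartAt IE x₀ x)) := by
  have h1top : ((⊤ : ℕ∞) : WithTop ℕ∞) ≠ 0 := by simp
  refine vfAction_rep x₀ hx ?_ (fun z hz => (congrArg f ((extChartAt IE x₀).left_inv hz)).symm) Y
  exact ((contDiffOn_rep hf x₀).differentiableOn h1top).differentiableAt
    ((isOpen_extChartAt_target x₀).mem_nhds ((extChartAt IE x₀).map_source hx))

lemma mfderiv_eq_fderiv_rep (x₀ : M) {x : M} (hx : x ∈ (extChartAt IE x₀).source)
    {f : M → ℝ} (hf : ContMDiff IE 𝓘(ℝ, ℝ) (⊤ : ℕ∞) f) :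
    mfderiv IE 𝓘(ℝ, ℝ) f x = (fderiv ℝ (f ∘ (extChartAt IE x₀).symm) (extChartAt IE x₀ x)).comp
      (mfderiv IE IE (extChartAt IE x₀) x) := by
  have h1top : ((⊤ : ℕ∞) : WithTop ℕ∞) ≠ 0 := by simp
  exact rep_mfderiv x₀ hx (((contDiffOn_rep hf x₀).differentiableOn h1top).differentiableAt
    ((isOpen_extChartAt_target x₀).mem_nhds ((extChartAt IE x₀).map_source hx)))
    (fun z hz => (congrArg f ((extChartAt IE x₀).left_inv hz)).symm)

lemma vfAction_const (Y : (x : M) → TangentSpace IE x) (c : ℝ) (x : M) :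
    vfAction Y (fun _ => c) x = 0 := by
  rw [vfAction, mfderiv_const]
  rfl

end Helpers

/-- Proposition 3.6 ii) of the paper for `k = 1`: on a strict homogeneous structure
`(M, Δ)`, a first-order differential operator `D = X ⊕ h`, acting on functions by
`D f = X f + h·f`, is `Δ`-homogeneous of degree `n` (i.e. `[Δ,X] = n • X` and
`Δ h = n·h`) if and only if `D f` is `Δ`-homogeneous of degree `n + deg f` for every
`Δ`-homogeneous function `f` of degree `1` or `0`. -/
theorem stmt_18 {E : Type*} [NormedAddCommGroup E] [NormedSpace ℝ E]
    {M : Type*} [TopologicalSpace M] [ChartedSpace E M]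
    [IsManifold 𝓘(ℝ, E) ((⊤ : ℕ∞) : WithTop ℕ∞) M]
    (Δ X : (x : M) → TangentSpace 𝓘(ℝ, E) x)
    (hΔ : ContMDiff 𝓘(ℝ, E) 𝓘(ℝ, E).tangent (⊤ : ℕ∞)
      (fun x => (⟨x, Δ x⟩ : TangentBundle 𝓘(ℝ, E) M)))
    (hX : ContMDiff 𝓘(ℝ, E) 𝓘(ℝ, E).tangent (⊤ : ℕ∞)
      (fun x => (⟨x, X x⟩ : TangentBundle 𝓘(ℝ, E) M)))
    (h : M → ℝ) (hh : ContMDiff 𝓘(ℝ, E) 𝓘(ℝ, ℝ) (⊤ : ℕ∞) h)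
    (n : ℝ)
    (hstrict : ∃ O : Set M, IsOpen O ∧ Dense O ∧ ∀ x ∈ O,
      Submodule.span ℝ
        {ℓ : TangentSpace 𝓘(ℝ, E) x →L[ℝ] ℝ |
          ∃ f : M → ℝ, ContMDiff 𝓘(ℝ, E) 𝓘(ℝ, ℝ) (⊤ : ℕ∞) f ∧
            (∀ y : M, vfAction Δ f y = f y) ∧
            ℓ = mfderiv 𝓘(ℝ, E) 𝓘(ℝ, ℝ) f x} = ⊤) :
    ((∀ x : M, mLieBracket Δ X x = n • X x) ∧ (∀ y : M, vfAction Δ h y = n * h y)) ↔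
    ((∀ f : M → ℝ, ContMDiff 𝓘(ℝ, E) 𝓘(ℝ, ℝ) (⊤ : ℕ∞) f →
        (∀ y : M, vfAction Δ f y = f y) →
        ∀ y : M, vfAction Δ (fun z => vfAction X f z + h z * f z) y
          = (n + 1) * (vfAction X f y + h y * f y)) ∧
      (∀ f : M → ℝ, ContMDiff 𝓘(ℝ, E) 𝓘(ℝ, ℝ) (⊤ : ℕ∞) f →
        (∀ y : M, vfAction Δ f y = 0) →
        ∀ y : M, vfAction Δ (fun z => vfAction X f z + h z * f z) y
          = n * (vfAction X f y + h y * f y))) := by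
  classical
  constructor
  · rintro ⟨H1, H2⟩
    have key : ∀ (f : M → ℝ), ContMDiff 𝓘(ℝ, E) 𝓘(ℝ, ℝ) (⊤ : ℕ∞) f → ∀ y : M,
        vfAction Δ (fun z => vfAction X f z + h z * f z) y
          = n * vfAction X f y + vfAction X (fun z => vfAction Δ f z) y
            + n * h y * f y + h y * vfAction Δ f y := by
      intro f hf y
      have hx : y ∈ (extChartAt 𝓘(ℝ, E) y).source := mem_extChartAt_source y
      have hm := master hΔ hX hh hf y hx
      have hinv := isInvertible_mfderiv_extChartAt (I := 𝓘(ℝ, E)) hx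
      have hbr : VectorField.lieBracket ℝ (chartPushforward y Δ) (chartPushforward y X)
          (extChartAt 𝓘(ℝ, E) y y)
          = n • chartPushforward y X (extChartAt 𝓘(ℝ, E) y y) := by
        have h1 := H1 y
        rw [mLieBracket] at h1
        rw [hinv.inverse_apply_eq.1 h1, map_smul, chartPushforward_apply y X hx]
        rfl
      rw [hm, hbr, map_smul, ← vfAction_eq_fderiv y hx hf X, H2 y, smul_eq_mul]
    constructor
    · intro f hf hdeg y
      have hk := key f hf y
      have hd : (fun z => vfAction Δ f z) = f := funext hdeg
      rw [hd] at hk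
      rw [hk, hdeg y]
      ring
    · intro f hf hdeg y
      have hk := key f hf y
      have hd : (fun z => vfAction Δ f z) = fun _ => (0 : ℝ) := funext hdeg
      rw [hd] at hk
      rw [hk, hdeg y, vfAction_const]
      ring
  · rintro ⟨Hdeg1, Hdeg0⟩
    have H2 : ∀ y, vfAction Δ h y = n * h y := by
      intro y
      have h0 : ∀ z : M, vfAction Δ (fun _ => (1 : ℝ)) z = 0 := fun z => vfAction_const Δ 1 z
      have h1 : (fun z => vfAction X (fun _ => (1 : ℝ)) z + h z * 1) = h := by
        funext z
        rw [vfAction_const]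
        ring
      have h2 := Hdeg0 (fun _ => 1) contMDiff_const h0 y
      rw [h1, vfAction_const] at h2
      simpa using h2
    refine ⟨?_, H2⟩
    intro x₀
    obtain ⟨O, hOopen, hOdense, hspan⟩ := hstrict
    have ht : IsOpen (extChartAt 𝓘(ℝ, E) x₀).target := isOpen_extChartAt_target x₀
    have hΔ'c := contDiffOn_chartPushforward hΔ x₀
    have hX'c := contDiffOn_chartPushforward hX x₀
    set ψ := extChartAt 𝓘(ℝ, E) x₀ with hψdef
    set Δ' := chartPushforward x₀ Δ with hΔ'def
    set X' := chartPushforward x₀ X with hX'def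
    set W : E → E := fun y => VectorField.lieBracket ℝ Δ' X' y - n • X' y with hWdef
    have hWcont : ContinuousOn W ψ.target := by
      have c1' : ContDiffOn ℝ (⊤ : ℕ∞) (fderiv ℝ X') ψ.target :=
        hX'c.fderiv_of_isOpen ht (le_of_eq rfl)
      have c2' : ContDiffOn ℝ (⊤ : ℕ∞) (fderiv ℝ Δ') ψ.target :=
        hΔ'c.fderiv_of_isOpen ht (le_of_eq rfl)
      have c1 : ContinuousOn (fderiv ℝ X') ψ.target := c1'.continuousOn
      have c2 : ContinuousOn (fderiv ℝ Δ') ψ.target := c2'.continuousOn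
      exact ((c1.clm_apply hΔ'c.continuousOn).sub
        (c2.clm_apply hX'c.continuousOn)).sub (continuousOn_const.smul hX'c.continuousOn)
    have hWzero : ∀ z, z ∈ ψ.source → z ∈ O → W (ψ z) = 0 := by
      intro z hzs hzO
      have hinvz := isInvertible_mfderiv_extChartAt (I := 𝓘(ℝ, E)) hzs
      set v : TangentSpace 𝓘(ℝ, E) z := (mfderiv 𝓘(ℝ, E) 𝓘(ℝ, E) ψ z).inverse (W (ψ z))
        with hvdef
      have hAv : W (ψ z) = mfderiv 𝓘(ℝ, E) 𝓘(ℝ, E) ψ z v := hinvz.inverse_apply_eq.1 rfl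
      have hall : ∀ ℓ ∈ {ℓ : TangentSpace 𝓘(ℝ, E) z →L[ℝ] ℝ |
          ∃ f : M → ℝ, ContMDiff 𝓘(ℝ, E) 𝓘(ℝ, ℝ) (⊤ : ℕ∞) f ∧
            (∀ y : M, vfAction Δ f y = f y) ∧
            ℓ = mfderiv 𝓘(ℝ, E) 𝓘(ℝ, ℝ) f z}, ℓ v = 0 := by
        rintro ℓ ⟨f, hf, hdeg, rfl⟩
        have e1 : mfderiv 𝓘(ℝ, E) 𝓘(ℝ, ℝ) f z v
            = fderiv ℝ (f ∘ ψ.symm) (ψ z) (W (ψ z)) := by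
          rw [mfderiv_eq_fderiv_rep x₀ hzs hf]
          show fderiv ℝ (f ∘ ψ.symm) (ψ z) (mfderiv 𝓘(ℝ, E) 𝓘(ℝ, E) ψ z v) = _
          rw [← hAv]
        have hm := master hΔ hX hh hf x₀ hzs
        have hd : (fun w => vfAction Δ f w) = f := funext hdeg
        rw [hd] at hm
        have hD := Hdeg1 f hf hdeg z
        rw [hD, H2 z, hdeg z] at hm
        have e2 : fderiv ℝ (f ∘ ψ.symm) (ψ z) (VectorField.lieBracket ℝ Δ' X' (ψ z))
            = n * vfAction X f z := by
          linear_combination -hm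
        have e3 : fderiv ℝ (f ∘ ψ.symm) (ψ z) (n • X' (ψ z)) = n * vfAction X f z := by
          rw [map_smul, ← vfAction_eq_fderiv x₀ hzs hf X]
          simp [smul_eq_mul]
        show mfderiv 𝓘(ℝ, E) 𝓘(ℝ, ℝ) f z v = 0
        rw [e1]
        show fderiv ℝ (f ∘ ψ.symm) (ψ z)
          (VectorField.lieBracket ℝ Δ' X' (ψ z) - n • X' (ψ z)) = 0
        rw [map_sub, e2, e3, sub_self]
      have hv : ∀ ℓ : TangentSpace 𝓘(ℝ, E) z →L[ℝ] ℝ, ℓ v = 0 := by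
        intro ℓ
        have hmem : ℓ ∈ Submodule.span ℝ {ℓ : TangentSpace 𝓘(ℝ, E) z →L[ℝ] ℝ |
            ∃ f : M → ℝ, ContMDiff 𝓘(ℝ, E) 𝓘(ℝ, ℝ) (⊤ : ℕ∞) f ∧
              (∀ y : M, vfAction Δ f y = f y) ∧
              ℓ = mfderiv 𝓘(ℝ, E) 𝓘(ℝ, ℝ) f z} := by
          rw [hspan z hzO]
          exact Submodule.mem_top
        refine Submodule.span_induction (p := fun ℓ _ => ℓ v = 0) hall ?_ ?_ ?_ hmem
        · rfl
        · intro a b _ _ ha hb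
          simp [ContinuousLinearMap.add_apply, ha, hb]
        · intro a ℓ' _ hℓ
          simp [ContinuousLinearMap.smul_apply, hℓ]
      have hv0 : v = 0 := by
        by_contra hne
        haveI : SeparatingDual ℝ (TangentSpace 𝓘(ℝ, E) z) := inferInstanceAs (SeparatingDual ℝ E)
        obtain ⟨ℓ, hℓ⟩ := SeparatingDual.exists_ne_zero (R := ℝ) hne
        exact hℓ (hv ℓ)
      rw [hAv, hv0, map_zero]
      rfl
    have hsub : ψ '' (ψ.source ∩ O) ⊆ ψ.target := by
      rintro y ⟨z, hz, rfl⟩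
      exact ψ.map_source hz.1
    have hxcl : (ψ x₀ : E) ∈ closure (ψ '' (ψ.source ∩ O)) := by
      have h1 : x₀ ∈ closure (ψ.source ∩ O) :=
        hOdense.open_subset_closure_inter (isOpen_extChartAt_source x₀)
          (mem_extChartAt_source x₀)
      exact ((continuousAt_extChartAt x₀).continuousWithinAt).mem_closure_image h1
    have hW0 : W (ψ x₀) = 0 := by
      haveI hne : (𝓝[ψ '' (ψ.source ∩ O)] (ψ x₀)).NeBot :=
        mem_closure_iff_nhdsWithin_neBot.1 hxcl
      have t1 : Filter.Tendsto W (𝓝[ψ '' (ψ.source ∩ O)] (ψ x₀)) (𝓝 (W (ψ x₀))) :=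
        (hWcont (ψ x₀) (ψ.map_source (mem_extChartAt_source x₀))).mono hsub
      have t2 : Filter.Tendsto W (𝓝[ψ '' (ψ.source ∩ O)] (ψ x₀)) (𝓝 0) := by
        refine Filter.Tendsto.congr' ?_ tendsto_const_nhds
        filter_upwards [self_mem_nhdsWithin] with y hy
        obtain ⟨z, hz, rfl⟩ := hy
        exact (hWzero z hz.1 hz.2).symm
      exact tendsto_nhds_unique t1 t2
    have hinv := isInvertible_mfderiv_extChartAt (I := 𝓘(ℝ, E))
      (mem_extChartAt_source (I := 𝓘(ℝ, E)) x₀)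
    rw [mLieBracket, ← hΔ'def, ← hX'def, ← hψdef]
    apply hinv.inverse_apply_eq.2
    have hl : VectorField.lieBracket ℝ Δ' X' (ψ x₀) = n • X' (ψ x₀) := by
      have h5 := hW0
      rw [hWdef, sub_eq_zero] at h5
      exact h5
    have hcp : X' (ψ x₀) = mfderiv 𝓘(ℝ, E) 𝓘(ℝ, E) ψ x₀ (X x₀) :=
      chartPushforward_apply x₀ X (mem_extChartAt_source x₀)
    rw [hl, hcp, map_smul]
    rfl
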